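/- Let d ≥ 1 be an integer, μ ≥ 0 and α ≥ 0 with 𝒟 := d − 2α − 1 ∈ (0, 1); set Θ(p) := √(|p|² + μ²) and ω(q) := √(|q|² + 1). Then there exists a constant C > 0 such that for all p ∈ ℝ^d: ∫_{ℝ^d} |q|^{−2α} · |Θ(q) − Θ(p−q)| / ((Θ(p−q) + ω(q))(Θ(q) + ω(q))) dq ≤ C · (|p|^𝒟 + 1). -/

import Mathlib

/-! The integrand is at most `2|q|^{-2α-1}` (from `|Θ(q) - Θ(p-q)| ≤ Θ(q) + Θ(p-q)` and
`|q| ≤ ω(q)`) and at most `|p| |q|^{-2α-2}` (since `Θ` is `1`-Lipschitz in `|·|` and the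
denominator is at least `ω(q)² ≥ |q|²`). Use the first bound on the ball of radius `|p|` and
the second outside it; in polar coordinates both pieces integrate to multiples of `|p|^𝒟`,
the inner one because `𝒟 > 0` and the outer one because `𝒟 < 1`. -/

open MeasureTheory Set Metric ENNReal

section PolarCoordinates

variable {E : Type*} [NormedAddCommGroup E] [NormedSpace ℝ E] [MeasurableSpace E] [BorelSpace E]
  [Nontrivial E] [FiniteDimensional ℝ E]

theorem lintegral_fun_norm_addHaar (μ : Measure E) [μ.IsAddHaarMeasure]
    (f : ℝ → ℝ≥0∞) (hf : Measurable f) :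
    ∫⁻ x, f ‖x‖ ∂μ = Module.finrank ℝ E * μ (ball 0 1) *
      ∫⁻ y in Ioi (0 : ℝ), ENNReal.ofReal (y ^ (Module.finrank ℝ E - 1)) * f y := by
  have hm : Measurable fun z : sphere (0 : E) 1 × Ioi (0 : ℝ) ↦ f z.2 :=
    hf.comp (measurable_subtype_coe.comp measurable_snd)
  calc ∫⁻ x, f ‖x‖ ∂μ
      = ∫⁻ x : ({0}ᶜ : Set E), f ‖(x : E)‖ ∂(μ.comap (↑)) := by
        rw [lintegral_subtype_comap (measurableSet_singleton 0).compl fun x ↦ f ‖x‖,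
          restrict_compl_singleton]
    _ = ∫⁻ z : sphere (0 : E) 1 × Ioi (0 : ℝ), f z.2
          ∂(μ.toSphere.prod (Measure.volumeIoiPow (Module.finrank ℝ E - 1))) := by
        rw [← μ.measurePreserving_homeomorphUnitSphereProd.lintegral_comp hm]; simp
    _ = μ.toSphere univ *
          ∫⁻ y : Ioi (0 : ℝ), f y ∂(Measure.volumeIoiPow (Module.finrank ℝ E - 1)) := by
        rw [lintegral_prod _ hm.aemeasurable]
        simp [lintegral_const, mul_comm]
    _ = _ := by
        rw [μ.toSphere_apply_univ, Measure.volumeIoiPow,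
          lintegral_withDensity_eq_lintegral_mul _ (by fun_prop)
            (g := fun y : Ioi (0 : ℝ) ↦ f y) (hf.comp measurable_subtype_coe)]
        exact congrArg _ (lintegral_subtype_comap measurableSet_Ioi
          fun y ↦ ENNReal.ofReal (y ^ (Module.finrank ℝ E - 1)) * f y)

end PolarCoordinates

theorem lintegral_Ioc_rpow_sub_one {s R : ℝ} (hs : 0 < s) (hR : 0 ≤ R) :
    ∫⁻ y in Ioc 0 R, ENNReal.ofReal (y ^ (s - 1)) = ENNReal.ofReal (R ^ s / s) := by
  have hint : IntegrableOn (fun y : ℝ ↦ y ^ (s - 1)) (Ioc 0 R) :=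
    (intervalIntegrable_iff_integrableOn_Ioc_of_le hR).mp
      (intervalIntegral.intervalIntegrable_rpow' (by linarith))
  rw [← ofReal_integral_eq_lintegral_ofReal hint
    ((ae_restrict_mem measurableSet_Ioc).mono fun y hy ↦ Real.rpow_nonneg hy.1.le _),
    ← intervalIntegral.integral_of_le hR, integral_rpow (Or.inl (by linarith))]
  simp [Real.zero_rpow hs.ne']

theorem lintegral_Ioi_rpow_sub_one {s R : ℝ} (hs : s < 0) (hR : 0 < R) :
    ∫⁻ y in Ioi R, ENNReal.ofReal (y ^ (s - 1)) = ENNReal.ofReal (R ^ s / -s) := by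
  rw [← ofReal_integral_eq_lintegral_ofReal (integrableOn_Ioi_rpow_of_lt (by linarith) hR)
    ((ae_restrict_mem measurableSet_Ioi).mono fun y hy ↦ Real.rpow_nonneg (hR.trans hy).le _),
    integral_Ioi_rpow_of_lt (by linarith) hR, sub_add_cancel, neg_div, div_neg]

theorem abs_sqrt_sq_add_sub_sqrt_sq_add_le (a b : ℝ) {c : ℝ} (hc : 0 ≤ c) :
    |√(a ^ 2 + c) - √(b ^ 2 + c)| ≤ |a - b| := by
  have h := abs_norm_sub_norm_le ((a : ℂ) + √c * Complex.I) (b + √c * Complex.I)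
  rwa [Complex.norm_add_mul_I, Complex.norm_add_mul_I, Real.sq_sqrt hc, add_sub_add_right_eq_sub,
    ← Complex.ofReal_sub, Complex.norm_real, Real.norm_eq_abs] at h

theorem abs_sub_div_add_mul_add_le {A B W x : ℝ} (hA : 0 ≤ A) (hB : 0 ≤ B) (hx : 0 < x)
    (hxW : x ≤ W) : |A - B| / ((B + W) * (A + W)) ≤ 2 / x := by
  rw [div_le_div_iff₀ (by nlinarith) hx]
  nlinarith [abs_sub_le_iff.2 (⟨by linarith, by linarith⟩ : A - B ≤ A + B ∧ B - A ≤ A + B),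
    mul_le_mul_of_nonneg_left hxW hA, mul_le_mul_of_nonneg_left hxW hB, mul_nonneg hA hB]

theorem le_sqrt_sq_add_one {x : ℝ} (hx : 0 ≤ x) : x ≤ √(x ^ 2 + 1) :=
  (Real.le_sqrt hx (by positivity)).2 (by linarith)

/-- The integrand, with `β = 2α`, `m = μ`, `x = |q|` and `y = |p - q|`. -/
noncomputable def thetaDiffKernel (β m x y : ℝ) : ℝ :=
  x ^ (-β) * |√(x ^ 2 + m ^ 2) - √(y ^ 2 + m ^ 2)| /
    ((√(y ^ 2 + m ^ 2) + √(x ^ 2 + 1)) * (√(x ^ 2 + m ^ 2) + √(x ^ 2 + 1)))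

section ThetaDiffKernel

variable (β m : ℝ) {x : ℝ} (y : ℝ)

theorem thetaDiffKernel_le_near (hx : 0 < x) : thetaDiffKernel β m x y ≤ 2 * x ^ (-β - 1) := by
  calc thetaDiffKernel β m x y
      = x ^ (-β) * (|√(x ^ 2 + m ^ 2) - √(y ^ 2 + m ^ 2)| /
          ((√(y ^ 2 + m ^ 2) + √(x ^ 2 + 1)) * (√(x ^ 2 + m ^ 2) + √(x ^ 2 + 1)))) :=
        mul_div_assoc _ _ _
    _ ≤ x ^ (-β) * (2 / x) := by
        gcongr ?_ * ?_
        exact abs_sub_div_add_mul_add_le (Real.sqrt_nonneg _) (Real.sqrt_nonneg _) hx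
          (le_sqrt_sq_add_one hx.le)
    _ = 2 * x ^ (-β - 1) := by rw [Real.rpow_sub_one hx.ne']; ring

theorem thetaDiffKernel_le_far (hx : 0 < x) :
    thetaDiffKernel β m x y ≤ |x - y| * x ^ (-β - 2) := by
  have hW := le_sqrt_sq_add_one hx.le
  calc thetaDiffKernel β m x y
      = x ^ (-β) * (|√(x ^ 2 + m ^ 2) - √(y ^ 2 + m ^ 2)| /
          ((√(y ^ 2 + m ^ 2) + √(x ^ 2 + 1)) * (√(x ^ 2 + m ^ 2) + √(x ^ 2 + 1)))) :=
        mul_div_assoc _ _ _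
    _ ≤ x ^ (-β) * (|x - y| / x ^ 2) := by
        gcongr ?_ * ?_
        refine div_le_div₀ (abs_nonneg _) (abs_sqrt_sq_add_sub_sqrt_sq_add_le x y (sq_nonneg m))
          (by positivity) ?_
        nlinarith [Real.sqrt_nonneg (y ^ 2 + m ^ 2), Real.sqrt_nonneg (x ^ 2 + m ^ 2),
          mul_le_mul hW hW hx.le (hx.le.trans hW)]
    _ = |x - y| * x ^ (-β - 2) := by rw [Real.rpow_sub hx, Real.rpow_two]; ring

end ThetaDiffKernel

noncomputable def nearFarBound (β R y : ℝ) : ℝ :=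
  if y ≤ R then 2 * y ^ (-β - 1) else R * y ^ (-β - 2)

theorem measurable_nearFarBound (β R : ℝ) : Measurable (nearFarBound β R) :=
  Measurable.ite measurableSet_Iic (by fun_prop) (by fun_prop)

theorem thetaDiffKernel_le_nearFarBound {E : Type*} [NormedAddCommGroup E] (β m : ℝ) (p : E)
    {q : E} (hq : q ≠ 0) : thetaDiffKernel β m ‖q‖ ‖p - q‖ ≤ nearFarBound β ‖p‖ ‖q‖ := by
  have hx := norm_pos_iff.2 hq
  unfold nearFarBound
  split_ifs
  · exact thetaDiffKernel_le_near β m _ hx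
  · calc thetaDiffKernel β m ‖q‖ ‖p - q‖ ≤ |‖q‖ - ‖p - q‖| * ‖q‖ ^ (-β - 2) :=
          thetaDiffKernel_le_far β m _ hx
      _ ≤ ‖p‖ * ‖q‖ ^ (-β - 2) := by
          gcongr
          simpa [norm_sub_rev] using abs_norm_sub_norm_le q (q - p)

theorem ofReal_pow_mul_ofReal_mul_rpow {n : ℕ} (hn : 1 ≤ n) {y : ℝ} (hy : 0 < y) {c : ℝ}
    (hc : 0 ≤ c) (t : ℝ) :
    ENNReal.ofReal (y ^ (n - 1)) * ENNReal.ofReal (c * y ^ t) =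
      ENNReal.ofReal c * ENNReal.ofReal (y ^ (t + n - 1)) := by
  rw [← ofReal_mul (by positivity), ← ofReal_mul hc, ← Real.rpow_natCast, Nat.cast_sub hn,
    Nat.cast_one, mul_left_comm, ← Real.rpow_add hy]
  ring_nf

theorem lintegral_pow_mul_nearFarBound {β R 𝒟 : ℝ} {n : ℕ} (hn : 1 ≤ n) (hR : 0 < R)
    (h𝒟 : (n : ℝ) - β - 1 = 𝒟) (h0 : 0 < 𝒟) (h1 : 𝒟 < 1) :
    ∫⁻ y in Ioi 0, ENNReal.ofReal (y ^ (n - 1)) * ENNReal.ofReal (nearFarBound β R y) =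
      ENNReal.ofReal ((2 / 𝒟 + 1 / (1 - 𝒟)) * R ^ 𝒟) := by
  have near : EqOn (fun y ↦ ENNReal.ofReal (y ^ (n - 1)) * ENNReal.ofReal (nearFarBound β R y))
      (fun y ↦ ENNReal.ofReal 2 * ENNReal.ofReal (y ^ (𝒟 - 1))) (Ioc 0 R) := fun y hy ↦ by
    simp only [nearFarBound, if_pos hy.2]
    rw [ofReal_pow_mul_ofReal_mul_rpow hn hy.1 zero_le_two, ← h𝒟]
    ring_nf
  have far : EqOn (fun y ↦ ENNReal.ofReal (y ^ (n - 1)) * ENNReal.ofReal (nearFarBound β R y))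
      (fun y ↦ ENNReal.ofReal R * ENNReal.ofReal (y ^ (𝒟 - 1 - 1))) (Ioi R) := fun y hy ↦ by
    simp only [nearFarBound, if_neg (not_le.2 (mem_Ioi.1 hy))]
    rw [ofReal_pow_mul_ofReal_mul_rpow hn (hR.trans hy) hR.le, ← h𝒟]
    ring_nf
  rw [← Ioc_union_Ioi_eq_Ioi hR.le, lintegral_union measurableSet_Ioi Ioc_disjoint_Ioi_same,
    setLIntegral_congr_fun measurableSet_Ioc near, setLIntegral_congr_fun measurableSet_Ioi far,
    lintegral_const_mul _ (by fun_prop), lintegral_const_mul _ (by fun_prop),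
    lintegral_Ioc_rpow_sub_one h0 hR.le, lintegral_Ioi_rpow_sub_one (by linarith) hR,
    ← ofReal_mul zero_le_two, ← ofReal_mul hR.le, ← ofReal_add (by positivity)
      (mul_nonneg hR.le (div_nonneg (by positivity) (by linarith)))]
  congr 1
  have hR𝒟 : R * R ^ (𝒟 - 1) = R ^ 𝒟 := by rw [Real.rpow_sub_one hR.ne']; field_simp
  rw [neg_sub, ← hR𝒟]
  field_simp

theorem stmt_16_general
    (d : ℕ) (hd : 1 ≤ d) (μ α : ℝ)
    (h𝒟0 : 0 < (d : ℝ) - 2 * α - 1) (h𝒟1 : (d : ℝ) - 2 * α - 1 < 1) :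
    ∃ C > (0:ℝ), ∀ p : EuclideanSpace ℝ (Fin d),
      (∫⁻ q : EuclideanSpace ℝ (Fin d),
          ENNReal.ofReal (‖q‖ ^ (-(2 * α)) *
            |Real.sqrt (‖q‖ ^ 2 + μ ^ 2) - Real.sqrt (‖p - q‖ ^ 2 + μ ^ 2)| /
            ((Real.sqrt (‖p - q‖ ^ 2 + μ ^ 2) + Real.sqrt (‖q‖ ^ 2 + 1)) *
              (Real.sqrt (‖q‖ ^ 2 + μ ^ 2) + Real.sqrt (‖q‖ ^ 2 + 1)))))
        ≤ ENNReal.ofReal (C * (‖p‖ ^ ((d : ℝ) - 2 * α - 1) + 1)) := by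
  have : Nonempty (Fin d) := ⟨⟨0, hd⟩⟩
  generalize h𝒟 : (d : ℝ) - 2 * α - 1 = 𝒟 at h𝒟0 h𝒟1 ⊢
  obtain ⟨v, hv, hball⟩ : ∃ v > 0, volume (ball (0 : EuclideanSpace ℝ (Fin d)) 1) = .ofReal v :=
    ⟨_, toReal_pos (measure_ball_pos _ _ one_pos).ne' measure_ball_lt_top.ne,
      (ofReal_toReal measure_ball_lt_top.ne).symm⟩
  refine ⟨d * v * (2 / 𝒟 + 1 / (1 - 𝒟)), ?_, fun p ↦ ?_⟩
  · have : 0 < 1 - 𝒟 := by linarith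
    positivity
  rcases eq_or_ne p 0 with rfl | hp
  · simp
  calc _ ≤ ∫⁻ q : EuclideanSpace ℝ (Fin d), ENNReal.ofReal (nearFarBound (2 * α) ‖p‖ ‖q‖) :=
        lintegral_mono_ae <| (volume.ae_ne 0).mono fun q hq ↦
          ENNReal.ofReal_le_ofReal (thetaDiffKernel_le_nearFarBound (2 * α) μ p hq)
    _ = ENNReal.ofReal (d * v * (2 / 𝒟 + 1 / (1 - 𝒟)) * ‖p‖ ^ 𝒟) := by
        rw [lintegral_fun_norm_addHaar volume _ (measurable_nearFarBound _ _).ennreal_ofReal,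
          finrank_euclideanSpace_fin, lintegral_pow_mul_nearFarBound hd (norm_pos_iff.2 hp) h𝒟
            h𝒟0 h𝒟1, hball, ← ofReal_natCast, ← ofReal_mul (by positivity),
          ← ofReal_mul (by positivity)]
        ring_nf
    _ ≤ _ := by gcongr; linarith

theorem stmt_16
    (d : ℕ) (hd : 1 ≤ d) (μ α : ℝ) (hμ : 0 ≤ μ) (hα : 0 ≤ α)
    (h𝒟0 : 0 < (d : ℝ) - 2 * α - 1) (h𝒟1 : (d : ℝ) - 2 * α - 1 < 1) :
    ∃ C > (0:ℝ), ∀ p : EuclideanSpace ℝ (Fin d),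
      (∫⁻ q : EuclideanSpace ℝ (Fin d),
          ENNReal.ofReal (‖q‖ ^ (-(2 * α)) *
            |Real.sqrt (‖q‖ ^ 2 + μ ^ 2) - Real.sqrt (‖p - q‖ ^ 2 + μ ^ 2)| /
            ((Real.sqrt (‖p - q‖ ^ 2 + μ ^ 2) + Real.sqrt (‖q‖ ^ 2 + 1)) *
              (Real.sqrt (‖q‖ ^ 2 + μ ^ 2) + Real.sqrt (‖q‖ ^ 2 + 1)))))
        ≤ ENNReal.ofReal (C * (‖p‖ ^ ((d : ℝ) - 2 * α - 1) + 1)) :=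
  stmt_16_general d hd μ α h𝒟0 h𝒟1
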